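/- arXiv:1005.0163 — 2 statements merged into one kernel-verified Lean document; each statement's English description precedes it below -/
import Mathlib

section
/- For every integer k ≥ 0 the polynomial P_k(x) = Σ_{i=1}^{k+1} Δ^i 0^{k+1} · (x−1)^{k+1−i} coincides with the Euler–Frobenius polynomial E_k(x); that is, E_k(x) = (x−1)^{k+1} · Σ_{i=1}^{k+1} Δ^i 0^{k+1} / (x−1)^i as an identity of polynomials. -/
open Finset

/-- Coefficient `a_s^{(k)}` of the Euler–Frobenius polynomial `E_k`. -/
noncomputable def efCoeff (k s : ℕ) : ℝ :=
  ∑ j ∈ Finset.range (s + 1),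
    (-1 : ℝ) ^ j * (Nat.choose (k + 2) j : ℝ) * ((s + 1 - j : ℕ) : ℝ) ^ (k + 1)

/-- The Euler–Frobenius polynomial `E_k` evaluated at a real number `x`. -/
noncomputable def EF (k : ℕ) (x : ℝ) : ℝ :=
  ∑ s ∈ Finset.range (k + 1), efCoeff k s * x ^ s

/-- `Δ^i 0^m`, the `i`-th forward difference of `γ ↦ γ^m` at `0`. -/
noncomputable def fdiff (i m : ℕ) : ℝ :=
  ∑ α ∈ Finset.range (i + 1), (-1 : ℝ) ^ (i - α) * (Nat.choose i α : ℝ) * (α : ℝ) ^ m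

lemma neg_one_pow_eq_of_mod (a b : ℕ) (h : a % 2 = b % 2) : ((-1:ℝ))^a = (-1)^b := by
  conv_lhs => rw [← Nat.div_add_mod a 2]
  conv_rhs => rw [← Nat.div_add_mod b 2]
  rw [pow_add, pow_add, pow_mul, pow_mul, neg_one_sq, one_pow, one_pow, h]

lemma alt_sum_choose_pow (t : ℕ) : ∀ N : ℕ, t < N →
    ∑ m ∈ Finset.range (N+1), (-1:ℝ)^m * (N.choose m : ℝ) * (m:ℝ)^t = 0 := by
  induction t using Nat.strong_induction_on with
  | _ t IH =>
    intro N hN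
    obtain ⟨N', rfl⟩ : ∃ N', N = N' + 1 := ⟨N - 1, by omega⟩
    cases t with
    | zero =>
      simp only [pow_zero, mul_one]
      exact_mod_cast Int.alternating_sum_range_choose_of_ne (Nat.succ_ne_zero N')
    | succ u =>
      have inner : ∑ i ∈ Finset.range (N'+1), (-1:ℝ)^i * (N'.choose i : ℝ) * ((i:ℝ)+1)^u = 0 := by
        have expand : ∀ i : ℕ, ((i:ℝ)+1)^u
            = ∑ r ∈ Finset.range (u+1), (i:ℝ)^r * (u.choose r : ℝ) := by
          intro i
          rw [add_pow]
          exact Finset.sum_congr rfl fun r _ => by rw [one_pow, mul_one]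
        calc ∑ i ∈ Finset.range (N'+1), (-1:ℝ)^i * (N'.choose i : ℝ) * ((i:ℝ)+1)^u
            = ∑ i ∈ Finset.range (N'+1), ∑ r ∈ Finset.range (u+1),
                (u.choose r : ℝ) * ((-1:ℝ)^i * (N'.choose i : ℝ) * (i:ℝ)^r) := by
              refine Finset.sum_congr rfl fun i _ => ?_
              rw [expand, Finset.mul_sum]
              exact Finset.sum_congr rfl fun r _ => by ring
          _ = ∑ r ∈ Finset.range (u+1), (u.choose r : ℝ) *
                (∑ i ∈ Finset.range (N'+1), (-1:ℝ)^i * (N'.choose i : ℝ) * (i:ℝ)^r) := by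
              rw [Finset.sum_comm]
              exact Finset.sum_congr rfl fun r _ => by rw [Finset.mul_sum]
          _ = 0 := by
              refine Finset.sum_eq_zero fun r hr => ?_
              have hru := Finset.mem_range.mp hr
              rw [IH r hru N' (by omega), mul_zero]
      have key : ∀ i : ℕ, (-1:ℝ)^(i+1) * ((N'+1).choose (i+1) : ℝ) * (((i:ℕ)+1 : ℕ):ℝ)^(u+1)
          = -((N':ℝ)+1) * ((-1:ℝ)^i * (N'.choose i : ℝ) * ((i:ℝ)+1)^u) := by
        intro i
        have hc : (N'+1) * N'.choose i = (N'+1).choose (i+1) * (i+1) := Nat.add_one_mul_choose_eq N' i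
        have hcr : ((N':ℝ)+1) * (N'.choose i : ℝ) = ((N'+1).choose (i+1) : ℝ) * ((i:ℝ)+1) := by
          exact_mod_cast congrArg (Nat.cast : ℕ → ℝ) hc
        push_cast
        linear_combination ((-1:ℝ)^i * ((i:ℝ)+1)^u) * hcr
      rw [Finset.sum_range_succ']
      simp only [key]
      rw [← Finset.mul_sum, inner]
      simp

lemma sum_range_choose_col (n s : ℕ) :
    ∑ i ∈ Finset.range (n+1), i.choose s = (n+1).choose (s+1) := by
  induction n with
  | zero =>
    cases s with
    | zero => simp
    | succ s => simp [Nat.choose_eq_zero_of_lt (show 1 < s+1+1 by omega)]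
  | succ n ih =>
    rw [Finset.sum_range_succ, ih, Nat.choose_succ_succ (n+1) s, Nat.add_comm]

lemma vandermonde_upper (s : ℕ) : ∀ n a : ℕ,
    ∑ i ∈ Finset.range (n+1), i.choose a * (n - i).choose s = (n+1).choose (a+s+1) := by
  intro n
  induction n with
  | zero =>
    intro a
    cases a with
    | zero => cases s <;> simp [Nat.choose]
    | succ a => simp [Nat.choose_eq_zero_of_lt (show 1 < a+1+s+1 by omega)]
  | succ n ih =>
    intro a
    cases a with
    | zero =>
      simp only [Nat.choose_zero_right, one_mul]
      rw [← Finset.sum_range_reflect]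
      refine Eq.trans (Finset.sum_congr rfl fun j hj => ?_)
        (Eq.trans (sum_range_choose_col (n+1) s) ?_)
      · have := Finset.mem_range.mp hj
        congr 1
        omega
      · congr 1
        omega
    | succ a =>
      rw [Finset.sum_range_succ']
      have h1 : ∀ i ∈ Finset.range (n+1),
          (i+1).choose (a+1) * (n + 1 - (i+1)).choose s
          = i.choose a * (n - i).choose s + i.choose (a+1) * (n - i).choose s := by
        intro i hi
        have h2 : n + 1 - (i+1) = n - i := by omega
        rw [Nat.choose_succ_succ', h2, add_mul]
      rw [Finset.sum_congr rfl h1, Finset.sum_add_distrib, ih a, ih (a+1)]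
      have h3 : (n+1+1).choose (a+1+s+1) = (n+1).choose (a+s+1) + (n+1).choose (a+1+s+1) := by
        rw [show a+1+s+1 = (a+s+1)+1 by omega, Nat.choose_succ_succ' (n+1) (a+s+1)]
      rw [h3]
      simp [Nat.choose_zero_succ]

lemma efCoeff_eq (k s : ℕ) (hs : s ≤ k + 1) :
    efCoeff k s = ∑ α ∈ Finset.range (k+2),
      (-1:ℝ)^(k+1+s+α) * ((k+2).choose (α+s+1) : ℝ) * (α:ℝ)^(k+1) := by
  have hF : ∑ j ∈ Finset.range (k+3),
      (-1:ℝ)^j * ((k+2).choose j : ℝ) * ((s:ℝ)+1-(j:ℝ))^(k+1) = 0 := by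
    have expand : ∀ j : ℕ, ((s:ℝ)+1-(j:ℝ))^(k+1)
        = ∑ t ∈ Finset.range (k+2),
            (-1:ℝ)^t * (j:ℝ)^t * (((s:ℝ)+1)^(k+1-t) * ((k+1).choose t : ℝ)) := by
      intro j
      rw [show (s:ℝ)+1-(j:ℝ) = -(j:ℝ) + ((s:ℝ)+1) by ring, add_pow]
      refine Finset.sum_congr rfl fun t _ => ?_
      rw [neg_pow]
      ring
    calc ∑ j ∈ Finset.range (k+3), (-1:ℝ)^j * ((k+2).choose j : ℝ) * ((s:ℝ)+1-(j:ℝ))^(k+1)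
        = ∑ j ∈ Finset.range (k+3), ∑ t ∈ Finset.range (k+2),
            ((-1:ℝ)^t * (((s:ℝ)+1)^(k+1-t) * ((k+1).choose t : ℝ))) *
              ((-1:ℝ)^j * ((k+2).choose j : ℝ) * (j:ℝ)^t) := by
          refine Finset.sum_congr rfl fun j _ => ?_
          rw [expand, Finset.mul_sum]
          exact Finset.sum_congr rfl fun t _ => by ring
      _ = ∑ t ∈ Finset.range (k+2), ((-1:ℝ)^t * (((s:ℝ)+1)^(k+1-t) * ((k+1).choose t : ℝ))) *
            (∑ j ∈ Finset.range (k+3), (-1:ℝ)^j * ((k+2).choose j : ℝ) * (j:ℝ)^t) := by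
          rw [Finset.sum_comm]
          exact Finset.sum_congr rfl fun t _ => by rw [Finset.mul_sum]
      _ = 0 := by
          refine Finset.sum_eq_zero fun t ht => ?_
          have htm := Finset.mem_range.mp ht
          rw [alt_sum_choose_pow t (k+2) (by omega), mul_zero]
  rw [Finset.range_eq_Ico,
    ← Finset.sum_Ico_consecutive _ (Nat.zero_le (s+1)) (show s+1 ≤ k+3 by omega)] at hF
  have hfirst : ∑ j ∈ Finset.Ico 0 (s+1),
      (-1:ℝ)^j * ((k+2).choose j : ℝ) * ((s:ℝ)+1-(j:ℝ))^(k+1) = efCoeff k s := by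
    rw [← Finset.range_eq_Ico, efCoeff]
    refine Finset.sum_congr rfl fun j hj => ?_
    have hjs := Finset.mem_range.mp hj
    congr 2
    push_cast [Nat.cast_sub (show j ≤ s+1 by omega)]
    ring
  have hext : ∑ α ∈ Finset.range (k+2),
        (-1:ℝ)^(k+1+s+α) * ((k+2).choose (α+s+1) : ℝ) * (α:ℝ)^(k+1)
      = ∑ α ∈ Finset.range (k+2-s),
        (-1:ℝ)^(k+1+s+α) * ((k+2).choose (α+s+1) : ℝ) * (α:ℝ)^(k+1) := by
    refine (Finset.sum_subset (Finset.range_subset_range.mpr (show k+2-s ≤ k+2 by omega)) ?_).symm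
    intro α hα hα2
    have h1 : k+2-s ≤ α := by
      by_contra hc
      exact hα2 (Finset.mem_range.mpr (by omega))
    rw [Nat.choose_eq_zero_of_lt (show k+2 < α+s+1 by omega)]
    simp
  have hsecond : ∑ j ∈ Finset.Ico (s+1) (k+3),
      (-1:ℝ)^j * ((k+2).choose j : ℝ) * ((s:ℝ)+1-(j:ℝ))^(k+1)
      = - ∑ α ∈ Finset.range (k+2-s),
          (-1:ℝ)^(k+1+s+α) * ((k+2).choose (α+s+1) : ℝ) * (α:ℝ)^(k+1) := by
    rw [Finset.sum_Ico_eq_sum_range, show k+3-(s+1) = k+2-s by omega, ← Finset.sum_neg_distrib]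
    refine Finset.sum_congr rfl fun α _ => ?_
    rw [show s+1+α = α+s+1 by omega]
    have hcast : ((s:ℝ))+1-((α+s+1 : ℕ):ℝ) = -(α:ℝ) := by push_cast; ring
    rw [hcast]
    have hsign : (-1:ℝ)^(α+s+1) * (-1:ℝ)^(k+1) = -((-1:ℝ)^(k+1+s+α)) := by
      rw [← pow_add, neg_one_pow_eq_of_mod (α+s+1+(k+1)) (k+1+s+α+1) (by omega), pow_succ]
      ring
    linear_combination (((k+2).choose (α+s+1) : ℝ) * (α:ℝ)^(k+1)) * hsign
  rw [hfirst, hsecond] at hF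
  rw [hext]
  linarith [hF]

lemma dS_eq (k s : ℕ) :
    ∑ i ∈ Finset.range (k+2),
      fdiff i (k+1) * ((-1:ℝ)^((k+1-i)-s) * ((k+1-i).choose s : ℝ))
    = ∑ α ∈ Finset.range (k+2),
      (-1:ℝ)^(k+1+s+α) * ((k+2).choose (α+s+1) : ℝ) * (α:ℝ)^(k+1) := by
  have h1 : ∀ i ∈ Finset.range (k+2),
      fdiff i (k+1) * ((-1:ℝ)^((k+1-i)-s) * ((k+1-i).choose s : ℝ))
      = ∑ α ∈ Finset.range (k+2),
          ((-1:ℝ)^(i-α) * (i.choose α : ℝ) * (α:ℝ)^(k+1)) *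
            ((-1:ℝ)^((k+1-i)-s) * ((k+1-i).choose s : ℝ)) := by
    intro i hi
    have hik := Finset.mem_range.mp hi
    rw [fdiff, Finset.sum_subset (Finset.range_subset_range.mpr (show i+1 ≤ k+2 by omega))
      (fun α _ hα2 => by
        have : i < α := by
          by_contra hc
          exact hα2 (Finset.mem_range.mpr (by omega))
        simp [Nat.choose_eq_zero_of_lt this]), Finset.sum_mul]
  rw [Finset.sum_congr rfl h1, Finset.sum_comm]
  refine Finset.sum_congr rfl fun α hα => ?_
  have h2 : ∀ i ∈ Finset.range (k+2),
      ((-1:ℝ)^(i-α) * (i.choose α:ℝ) * (α:ℝ)^(k+1)) *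
        ((-1:ℝ)^((k+1-i)-s) * ((k+1-i).choose s:ℝ))
      = (-1:ℝ)^(k+1+s+α) * ((i.choose α * (k+1-i).choose s : ℕ):ℝ) * (α:ℝ)^(k+1) := by
    intro i hi
    have hik := Finset.mem_range.mp hi
    by_cases hαi : α ≤ i
    · by_cases hsni : s ≤ k+1-i
      · have hsign : (-1:ℝ)^(i-α) * (-1:ℝ)^((k+1-i)-s) = (-1:ℝ)^(k+1+s+α) := by
          rw [← pow_add, show (i-α) + ((k+1-i)-s) = (k+1) - (α+s) by omega]
          exact neg_one_pow_eq_of_mod _ _ (by omega)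
        push_cast
        linear_combination ((i.choose α:ℝ) * ((k+1-i).choose s:ℝ) * (α:ℝ)^(k+1)) * hsign
      · rw [Nat.choose_eq_zero_of_lt (show k+1-i < s by omega)]
        push_cast
        ring
    · rw [Nat.choose_eq_zero_of_lt (show i < α by omega)]
      push_cast
      ring
  rw [Finset.sum_congr rfl h2, ← Finset.sum_mul, ← Finset.mul_sum, ← Nat.cast_sum,
    vandermonde_upper s (k+1) α]

/-- The Euler–Frobenius polynomial `E_k` equals
`(x−1)^{k+1} · Σ_{i=1}^{k+1} Δ^i 0^{k+1} / (x−1)^i`, i.e.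
`Σ_{i=1}^{k+1} Δ^i 0^{k+1} · (x−1)^{k+1−i}`, as an identity of polynomials. -/
theorem stmt_6 (k : ℕ) :
    ∀ x : ℝ, EF k x = ∑ i ∈ Finset.Icc 1 (k + 1), fdiff i (k + 1) * (x - 1) ^ (k + 1 - i) := by
  intro x
  -- extend RHS sum to range (k+2)
  have hIcc : ∑ i ∈ Finset.Icc 1 (k+1), fdiff i (k+1) * (x-1)^(k+1-i)
      = ∑ i ∈ Finset.range (k+2), fdiff i (k+1) * (x-1)^(k+1-i) := by
    rw [← Finset.Ico_add_one_right_eq_Icc, Finset.sum_Ico_eq_sum_range, Finset.sum_range_succ']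
    have h0 : fdiff 0 (k+1) = 0 := by simp [fdiff]
    rw [h0, zero_mul, add_zero, show k+1+1-1 = k+1 by omega]
    exact Finset.sum_congr rfl fun i _ => by rw [Nat.add_comm 1 i]
  -- expand (x-1)^(k+1-i)
  have hexp : ∀ i ∈ Finset.range (k+2), fdiff i (k+1) * (x-1)^(k+1-i)
      = ∑ s ∈ Finset.range (k+2),
          (fdiff i (k+1) * ((-1:ℝ)^((k+1-i)-s) * ((k+1-i).choose s : ℝ))) * x^s := by
    intro i hi
    rw [show x - 1 = x + (-1) by ring, add_pow, Finset.mul_sum]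
    rw [Finset.sum_subset (Finset.range_subset_range.mpr (show (k+1-i)+1 ≤ k+2 by omega))
      (fun s _ hs2 => by
        have : k+1-i < s := by
          by_contra hc
          exact hs2 (Finset.mem_range.mpr (by omega))
        simp [Nat.choose_eq_zero_of_lt this])]
    exact Finset.sum_congr rfl fun s _ => by ring
  -- LHS: extend to range (k+2)
  have hEF : EF k x = ∑ s ∈ Finset.range (k+2), efCoeff k s * x^s := by
    rw [EF, Finset.sum_range_succ (fun s => efCoeff k s * x^s) (k+1)]
    have : efCoeff k (k+1) = 0 := by
      rw [efCoeff_eq k (k+1) le_rfl]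
      refine Finset.sum_eq_zero fun α hα => ?_
      match α with
      | 0 => simp
      | α+1 =>
        rw [Nat.choose_eq_zero_of_lt (show k+2 < α+1+(k+1)+1 by omega)]
        simp
    rw [this, zero_mul, add_zero]
  rw [hEF, hIcc, Finset.sum_congr rfl hexp, Finset.sum_comm]
  refine Finset.sum_congr rfl fun s hs => ?_
  have hsk := Finset.mem_range.mp hs
  rw [← Finset.sum_mul, dS_eq k s, ← efCoeff_eq k s (by omega)]
end

section
/- Let k ≥ 0 be an integer and let q be a real root of the Euler–Frobenius polynomial E_k (so in particular q ≠ 1, since all roots of E_k are negative). Then Σ_{i=1}^{k+1} Δ^i 0^{k+1} / (q−1)^i = 0. -/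
open Finset

/-!
Write `n = k + 1` and let `umbral n` be the linear functional on `ℝ[X]` sending `X ^ α` to
`α ^ n`, so that `Δ^i 0^n = umbral n ((X - 1) ^ i)`. Multiplied by `x - q`, both
`∑ i, (x - 1) ^ i (q - 1) ^ (n - i)` and `∑ s, q ^ s ∑ j, (-1) ^ j C(n+1, j) x ^ (n - s - j)`
telescope to `(x - 1) ^ (n + 1) - (q - 1) ^ (n + 1)`, so they agree in `ℝ[X]` with `x = X`.
Applying `umbral n` and the palindromy `a_s = a_{k-s}` of the Euler–Frobenius coefficients gives
`∑_{i ≤ n} Δ^i 0^n (q - 1) ^ (n - i) = E_k(q)`. At `q = 1` the left side is `n! ≠ 0`, so a root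
has `q ≠ 1`, and dividing by `(q - 1) ^ n` (with `Δ^0 0^n = 0`) gives the claim.
-/

theorem fdiff_eq_fwdDiff_iter (i m : ℕ) : fdiff i m = (fwdDiff 1)^[i] (fun x : ℝ ↦ x ^ m) 0 := by
  simp only [fwdDiff_iter_eq_sum_shift, fdiff, zsmul_eq_mul, nsmul_eq_mul, mul_one, zero_add,
    Int.cast_mul, Int.cast_pow, Int.cast_neg, Int.cast_one, Int.cast_natCast]

theorem fdiff_self (m : ℕ) : fdiff m m = m.factorial := by
  rw [fdiff_eq_fwdDiff_iter, fwdDiff_iter_eq_factorial, Pi.natCast_apply]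

theorem fdiff_zero_left (m : ℕ) : fdiff 0 (m + 1) = 0 := by
  simp [fdiff]

theorem sum_neg_one_pow_mul_choose_mul_add_pow_eq_zero {R : Type*} [CommRing R] (n : ℕ) (y : R) :
    ∑ l ∈ range (n + 2), (-1) ^ (n + 1 - l) * ((n + 1).choose l : R) * (y + l) ^ n = 0 := by
  have h := congrFun (fwdDiff_iter_pow_eq_zero_of_lt (R := R) (n := n + 1) (Nat.lt_add_one n)) y
  rw [fwdDiff_iter_eq_sum_shift] at h
  simpa only [zsmul_eq_mul, nsmul_eq_mul, mul_one, Int.cast_mul, Int.cast_pow, Int.cast_neg,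
    Int.cast_one, Int.cast_natCast, Pi.zero_apply] using h

-- The `(k + 2)`-nd forward difference of `x ^ (k + 1)` at `-(t + 1)` vanishes; its terms
-- below `t + 1` add up to `-a_t` and the others to `a_s`.
theorem efCoeff_symm {k s t : ℕ} (hst : s + t = k) : efCoeff k s = efCoeff k t := by
  have hvan := sum_neg_one_pow_mul_choose_mul_add_pow_eq_zero (k + 1) (-(t + 1 : ℝ))
  rw [show k + 1 + 2 = (t + 1) + (s + 2) by omega, sum_range_add] at hvan
  have hsign {a b : ℕ} (h : a % 2 = (b + 1) % 2) : (-1 : ℝ) ^ a = -(-1) ^ b := by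
    rw [neg_one_pow_eq_pow_mod_two, h, ← neg_one_pow_eq_pow_mod_two, pow_succ, mul_neg_one]
  have hlow : ∑ l ∈ range (t + 1), (-1) ^ (k + 1 + 1 - l) * ((k + 1 + 1).choose l : ℝ) *
      (-(t + 1 : ℝ) + l) ^ (k + 1) = -efCoeff k t := by
    rw [efCoeff, ← sum_neg_distrib]
    refine sum_congr rfl fun l hl => ?_
    have hl : l ≤ t + 1 := by simp only [mem_range] at hl; omega
    rw [show -(t + 1 : ℝ) + l = -1 * ((t + 1 - l : ℕ) : ℝ) by push_cast [hl]; ring, mul_pow,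
      ← mul_assoc, mul_right_comm _ _ ((-1 : ℝ) ^ (k + 1)), ← pow_add,
      hsign (b := l) (by omega)]
    ring
  have hhigh : ∑ v ∈ range (s + 2), (-1) ^ (k + 1 + 1 - (t + 1 + v)) *
      ((k + 1 + 1).choose (t + 1 + v) : ℝ) * (-(t + 1 : ℝ) + ((t + 1 + v : ℕ) : ℝ)) ^ (k + 1) =
      efCoeff k s := by
    rw [← sum_range_reflect, sum_range_succ, efCoeff, show s + 2 - 1 - (s + 1) = 0 by omega,
      add_zero, Nat.cast_add, Nat.cast_one, neg_add_cancel, zero_pow (Nat.succ_ne_zero k),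
      mul_zero, add_zero]
    refine sum_congr rfl fun j hj => ?_
    have hj : j ≤ s := by simp only [mem_range] at hj; omega
    rw [show s + 2 - 1 - j = s + 1 - j by omega,
      show k + 1 + 1 - (t + 1 + (s + 1 - j)) = j by omega,
      show t + 1 + (s + 1 - j) = k + 2 - j by omega, Nat.choose_symm (by omega)]
    have hbase : -(t + 1 : ℝ) + ((k + 2 - j : ℕ) : ℝ) = ((s + 1 - j : ℕ) : ℝ) := by
      rw [← hst]; push_cast [show j ≤ s + 1 by omega, show j ≤ s + t + 2 by omega]; ring
    rw [hbase]
  linarith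

open Polynomial

noncomputable def umbral (n : ℕ) : ℝ[X] →ₗ[ℝ] ℝ :=
  lsum fun α => LinearMap.mulRight ℝ ((α : ℝ) ^ n)

theorem umbral_C_mul_X_pow (n α : ℕ) (a : ℝ) : umbral n (C a * X ^ α) = a * (α : ℝ) ^ n := by
  rw [umbral, lsum_apply, C_mul_X_pow_eq_monomial, sum_monomial_index] <;> simp

theorem fdiff_eq_umbral (i m : ℕ) : fdiff i m = umbral m ((X - 1) ^ i) := by
  have : (X - 1 : ℝ[X]) ^ i =
      ∑ α ∈ range (i + 1), C ((-1) ^ (i - α) * (i.choose α : ℝ)) * X ^ α := by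
    rw [sub_eq_add_neg, add_pow]
    refine Finset.sum_congr rfl fun α _ => ?_
    simp only [map_mul, map_pow, map_neg, map_one, map_natCast]
    ring
  simp only [this, map_sum, umbral_C_mul_X_pow, fdiff]

theorem sum_sub_one_pow_mul_sub_one_pow {R : Type*} [CommRing R] [IsDomain R] {x q : R}
    (hxq : x ≠ q) (n : ℕ) :
    ∑ i ∈ range (n + 1), (x - 1) ^ i * (q - 1) ^ (n - i) =
      ∑ s ∈ range (n + 1), q ^ s *
        ∑ j ∈ range (n + 1 - s), (-1) ^ j * ((n + 1).choose j : R) * x ^ (n - s - j) := by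
  refine mul_right_cancel₀ (sub_ne_zero.2 hxq) ?_
  have hL := (Commute.all (x - 1) (q - 1)).geom_sum₂_mul (n + 1)
  simp only [sub_sub_sub_cancel_right, Nat.add_sub_cancel] at hL
  rw [hL]
  have hbinom (y : R) : (y - 1) ^ (n + 1) = (-1) ^ (n + 1) +
      ∑ j ∈ range (n + 1), (-1) ^ j * ((n + 1).choose j : R) * y ^ (n + 1 - j) := by
    rw [sub_eq_neg_add, add_pow, sum_range_succ]
    simp only [Nat.choose_self, Nat.sub_self, pow_zero, Nat.cast_one, mul_one]
    rw [add_comm]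
    exact congrArg (_ + ·) (Finset.sum_congr rfl fun j _ => by ring)
  rw [hbinom, hbinom, add_sub_add_left_eq_sub, ← sum_sub_distrib]
  simp only [mul_sum, sum_mul]
  rw [sum_comm' (t' := range (n + 1)) (s' := fun j => range (n + 1 - j))
    (by intro s j; simp only [mem_range]; omega)]
  refine Finset.sum_congr rfl fun j _ => ?_
  have hgeom := (Commute.all q x).mul_neg_geom_sum₂ (n + 1 - j)
  rw [← mul_sub, ← hgeom, mul_sum, mul_sum]
  refine Finset.sum_congr rfl fun s _ => ?_
  rw [show n + 1 - j - 1 - s = n - s - j by omega]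
  ring

theorem sum_fdiff_mul_sub_one_pow_eq (n : ℕ) (q : ℝ) :
    ∑ i ∈ range (n + 1), fdiff i n * (q - 1) ^ (n - i) =
      ∑ s ∈ range (n + 1), q ^ s *
        ∑ j ∈ range (n + 1 - s), (-1) ^ j * ((n + 1).choose j : ℝ) * ((n - s - j : ℕ) : ℝ) ^ n := by
  have h := congrArg (umbral n) (sum_sub_one_pow_mul_sub_one_pow (X_ne_C q) n)
  have hC (e : ℕ) : (C q - 1) ^ e = C ((q - 1) ^ e) := by simp only [map_pow, map_sub, map_one]
  simp only [hC, ← smul_eq_C_mul, mul_comm _ (C _), mul_sum, map_sum, map_smul,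
    ← fdiff_eq_umbral, smul_eq_mul] at h
  have hterm (s j e : ℕ) : C q ^ s * ((-1) ^ j * ((n + 1).choose j : ℝ[X]) * X ^ e) =
      C (q ^ s * ((-1) ^ j * (n + 1).choose j)) * X ^ e := by
    simp only [map_mul, map_pow, map_neg, map_one, map_natCast]; ring
  simp only [hterm, umbral_C_mul_X_pow] at h
  rw [Finset.sum_congr rfl fun i _ => mul_comm (fdiff i n) _, h]
  simp only [mul_sum, mul_assoc]

theorem sum_fdiff_mul_sub_one_pow_eq_EF (k : ℕ) (q : ℝ) :
    ∑ i ∈ range (k + 2), fdiff i (k + 1) * (q - 1) ^ (k + 1 - i) = EF k q := by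
  rw [sum_fdiff_mul_sub_one_pow_eq, sum_range_succ, EF]
  simp only [show k + 1 + 1 - (k + 1) = 1 by omega, sum_range_one, Nat.sub_self, CharP.cast_eq_zero,
    zero_pow (Nat.succ_ne_zero k), mul_zero, add_zero]
  refine Finset.sum_congr rfl fun s hs => ?_
  have hs : s ≤ k := by simp only [mem_range] at hs; omega
  rw [efCoeff_symm (t := k - s) (by omega), efCoeff, mul_comm,
    show k + 1 + 1 - s = k - s + 1 + 1 by omega, sum_range_succ]
  simp only [show k + 1 - s - (k - s + 1) = 0 by omega, CharP.cast_eq_zero,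
    zero_pow (Nat.succ_ne_zero k), mul_zero, add_zero]
  refine congrArg (· * q ^ s) (Finset.sum_congr rfl fun j _ => ?_)
  rw [show k + 1 - s - j = k - s + 1 - j by omega]

/-- At any real root `q` of the Euler–Frobenius polynomial `E_k` one has
`Σ_{i=1}^{k+1} Δ^i 0^{k+1} / (q−1)^i = 0`. -/
theorem stmt_10 (k : ℕ) (q : ℝ) (hroot : EF k q = 0) :
    ∑ i ∈ Finset.Icc 1 (k + 1), fdiff i (k + 1) / (q - 1) ^ i = 0 := by
  have hsum := sum_fdiff_mul_sub_one_pow_eq_EF k q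
  have hq : q - 1 ≠ 0 := by
    intro hq
    rw [hroot, hq, sum_range_succ, Finset.sum_eq_zero fun i hi => by
      rw [zero_pow (by simp only [mem_range] at hi; omega), mul_zero], Nat.sub_self, pow_zero,
      mul_one, zero_add, fdiff_self] at hsum
    exact Nat.factorial_ne_zero _ (by exact_mod_cast hsum)
  rw [hroot, range_eq_Ico, sum_eq_sum_Ico_succ_bot (by omega), fdiff_zero_left, zero_mul,
    zero_add] at hsum
  calc ∑ i ∈ Icc 1 (k + 1), fdiff i (k + 1) / (q - 1) ^ i
      = (∑ i ∈ Ico 1 (k + 2), fdiff i (k + 1) * (q - 1) ^ (k + 1 - i)) / (q - 1) ^ (k + 1) := by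
        rw [← Ico_add_one_right_eq_Icc, Finset.sum_div]
        refine Finset.sum_congr rfl fun i hi => ?_
        rw [pow_sub₀ _ hq (by simp only [mem_Ico] at hi; omega)]
        field_simp
    _ = 0 := by rw [hsum, zero_div]
end
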